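/- Let Λ > 0 and define the 4×4 complex matrices 𝔯 := √Λ (J₁ ⊗ J₂ − J₂ ⊗ J₁) and r₋ := −(τ₁ ⊗ J₁ + τ₂ ⊗ J₂ + τ₃ ⊗ J₃). Then for every α ∈ 𝔰𝔲(2), the identity [𝔯, α ⊗ 1₂ + 1₂ ⊗ α] = −[r₋, α ⊗ 1₂ + 1₂ ⊗ α] holds; equivalently, 𝔯 + r₋ commutes with α ⊗ 1₂ + 1₂ ⊗ α for every traceless skew-Hermitian 2×2 complex matrix α. -/
import Mathlib


open Matrix Kronecker

/-- The (halved) Pauli matrices σ₁, σ₂, σ₃. -/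
noncomputable def sigM : Fin 3 → Matrix (Fin 2) (Fin 2) ℂ :=
  ![(1 / 2 : ℂ) • !![0, 1; 1, 0],
    (1 / 2 : ℂ) • !![0, -Complex.I; Complex.I, 0],
    (1 / 2 : ℂ) • !![1, 0; 0, -1]]

/-- The rotation generators `J_I := -i σ_I`. -/
noncomputable def Jmat : Fin 3 → Matrix (Fin 2) (Fin 2) ℂ :=
  fun I => (-Complex.I) • sigM I

/-- The matrices ξ₁, ξ₂, ξ₃. -/
noncomputable def xiM : Fin 3 → Matrix (Fin 2) (Fin 2) ℂ :=
  ![!![0, 0; Complex.I, 0],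
    !![0, 0; -1, 0],
    (Complex.I / 2) • !![1, 0; 0, -1]]

/-- The translation generators `τ_I := i √Λ ξ_I`. -/
noncomputable def tauM (Λ : ℝ) : Fin 3 → Matrix (Fin 2) (Fin 2) ℂ :=
  fun I => (Complex.I * (Real.sqrt Λ : ℂ)) • xiM I

/-- The little r-matrix `𝔯 := √Λ (J₁ ⊗ J₂ − J₂ ⊗ J₁)`. -/
noncomputable def rFrak (Λ : ℝ) : Matrix (Fin 2 × Fin 2) (Fin 2 × Fin 2) ℂ :=
  (Real.sqrt Λ : ℂ) • (Jmat 0 ⊗ₖ Jmat 1 - Jmat 1 ⊗ₖ Jmat 0)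

/-- The r-matrix `r₋ := −(τ₁ ⊗ J₁ + τ₂ ⊗ J₂ + τ₃ ⊗ J₃)`. -/
noncomputable def rMinus (Λ : ℝ) : Matrix (Fin 2 × Fin 2) (Fin 2 × Fin 2) ℂ :=
  -(tauM Λ 0 ⊗ₖ Jmat 0 + tauM Λ 1 ⊗ₖ Jmat 1 + tauM Λ 2 ⊗ₖ Jmat 2)

set_option maxHeartbeats 2000000 in
/-- For every traceless skew-Hermitian `α` (`α ∈ 𝔰𝔲(2)`),
`[𝔯, α⊗1 + 1⊗α] = −[r₋, α⊗1 + 1⊗α]`. -/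
theorem little_r_matrix_infinitesimal (Λ : ℝ) (hΛ : 0 < Λ)
    (α : Matrix (Fin 2) (Fin 2) ℂ) (hα : α.trace = 0) (hα' : α.conjTranspose = -α) :
    rFrak Λ * (α ⊗ₖ (1 : Matrix (Fin 2) (Fin 2) ℂ) + (1 : Matrix (Fin 2) (Fin 2) ℂ) ⊗ₖ α)
        - (α ⊗ₖ (1 : Matrix (Fin 2) (Fin 2) ℂ) + (1 : Matrix (Fin 2) (Fin 2) ℂ) ⊗ₖ α) * rFrak Λ
      = -(rMinus Λ * (α ⊗ₖ (1 : Matrix (Fin 2) (Fin 2) ℂ) + (1 : Matrix (Fin 2) (Fin 2) ℂ) ⊗ₖ α)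
          - (α ⊗ₖ (1 : Matrix (Fin 2) (Fin 2) ℂ) + (1 : Matrix (Fin 2) (Fin 2) ℂ) ⊗ₖ α) * rMinus Λ) := by
  have hd : α 1 1 = -α 0 0 := by
    have h := hα
    simp [Matrix.trace, Matrix.diag, Fin.sum_univ_succ] at h
    linear_combination h
  ext ⟨i, k⟩ ⟨j, l⟩
  fin_cases i <;> fin_cases k <;> fin_cases j <;> fin_cases l <;>
    simp [rFrak, rMinus, tauM, Jmat, sigM, xiM, Matrix.mul_apply, Fintype.sum_prod_type,
      Fin.sum_univ_succ, Matrix.one_apply, hd] <;> ring
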